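/- Let g be a finite-dimensional real Lie algebra whose dual space g* carries a Lie bracket [·,·]_* such that the induced cocommutator δ satisfies the cocycle condition. Then the double bracket on D(g) = g × g* satisfies the Jacobi identity, i.e. D(g) is a Lie algebra (the classical Drinfel'd double). -/
import Mathlib


open TensorProduct

/-- For a finite-dimensional real Lie algebra `g` whose dual carries a Lie
bracket such that the induced cocommutator `δ` satisfies the cocycle condition, the
double bracket on `D(g) = g × g*` satisfies the Jacobi identity. -/
theorem drinfeld_double_jacobi
    (g : Type*) [LieRing g] [LieAlgebra ℝ g] [FiniteDimensional ℝ g]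
    (br : Module.Dual ℝ g →ₗ[ℝ] Module.Dual ℝ g →ₗ[ℝ] Module.Dual ℝ g)
    (br_alt : ∀ α : Module.Dual ℝ g, br α α = 0)
    (br_jacobi : ∀ α β γ : Module.Dual ℝ g,
      br (br α β) γ + br (br β γ) α + br (br γ α) β = 0)
    (δ : g →ₗ[ℝ] g ⊗[ℝ] g)
    (hδ : ∀ (X : g) (α β : Module.Dual ℝ g),
      TensorProduct.lid ℝ ℝ (TensorProduct.map α β (δ X)) = br α β X)
    (cocycle : ∀ X Y : g,
      δ ⁅X, Y⁆ =
        (TensorProduct.map (LieAlgebra.ad ℝ g X : g →ₗ[ℝ] g) (LinearMap.id : g →ₗ[ℝ] g)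
            + TensorProduct.map (LinearMap.id : g →ₗ[ℝ] g) (LieAlgebra.ad ℝ g X : g →ₗ[ℝ] g)) (δ Y)
          - (TensorProduct.map (LieAlgebra.ad ℝ g Y : g →ₗ[ℝ] g) (LinearMap.id : g →ₗ[ℝ] g)
            + TensorProduct.map (LinearMap.id : g →ₗ[ℝ] g) (LieAlgebra.ad ℝ g Y : g →ₗ[ℝ] g)) (δ X))
    (a : Module.Dual ℝ g →ₗ[ℝ] g →ₗ[ℝ] g)
    (ha : ∀ (α : Module.Dual ℝ g) (X : g) (β : Module.Dual ℝ g),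
      β (a α X) = br α β X)
    (Dbr : g × Module.Dual ℝ g → g × Module.Dual ℝ g → g × Module.Dual ℝ g)
    (hDbr : ∀ (X Y : g) (α β : Module.Dual ℝ g),
      Dbr (X, α) (Y, β) =
        (⁅X, Y⁆ + a β X - a α Y,
          br α β + α ∘ₗ (LieAlgebra.ad ℝ g Y : g →ₗ[ℝ] g)
            - β ∘ₗ (LieAlgebra.ad ℝ g X : g →ₗ[ℝ] g))) :
    ∀ u v w : g × Module.Dual ℝ g,
      Dbr (Dbr u v) w + Dbr (Dbr v w) u + Dbr (Dbr w u) v = 0 := by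
  -- pointwise skew-symmetry of `br`
  have hskew0 : ∀ p q : Module.Dual ℝ g, br p q = - br q p := by
    intro p q
    have h0 : br q p + br p q = 0 := by
      have h1 := br_alt (p + q)
      simp only [map_add, LinearMap.add_apply, br_alt] at h1
      simpa [br_alt] using h1
    exact eq_neg_of_add_eq_zero_right h0
  have hskew : ∀ (p q : Module.Dual ℝ g) (V : g), br p q V = - br q p V := by
    intro p q V; rw [hskew0 p q]; simp
  have hskew2 : ∀ (p q r : Module.Dual ℝ g) (V : g),
      br (br p q) r V = - br (br q p) r V := by
    intro p q r V; rw [hskew0 p q]; simp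
  have hjac : ∀ (p q r : Module.Dual ℝ g) (V : g),
      br (br p q) r V + br (br q r) p V + br (br r p) q V = 0 := by
    intro p q r V
    have h := LinearMap.congr_fun (br_jacobi p q r) V
    simpa using h
  -- scalar form of the cocycle condition
  have hstar : ∀ (p q : Module.Dual ℝ g) (U V : g),
      br p q ⁅U, V⁆ =
        br (p ∘ₗ (LieAlgebra.ad ℝ g U : g →ₗ[ℝ] g)) q V
          + br p (q ∘ₗ (LieAlgebra.ad ℝ g U : g →ₗ[ℝ] g)) V
          - br (p ∘ₗ (LieAlgebra.ad ℝ g V : g →ₗ[ℝ] g)) q U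
          - br p (q ∘ₗ (LieAlgebra.ad ℝ g V : g →ₗ[ℝ] g)) U := by
    intro p q U V
    have k1 : ∀ (f : g →ₗ[ℝ] g) (t : g ⊗[ℝ] g),
        TensorProduct.map p q (TensorProduct.map f LinearMap.id t)
          = TensorProduct.map (p ∘ₗ f) q t := by
      intro f t
      rw [← LinearMap.comp_apply, ← TensorProduct.map_comp, LinearMap.comp_id]
    have k2 : ∀ (f : g →ₗ[ℝ] g) (t : g ⊗[ℝ] g),
        TensorProduct.map p q (TensorProduct.map LinearMap.id f t)
          = TensorProduct.map p (q ∘ₗ f) t := by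
      intro f t
      rw [← LinearMap.comp_apply, ← TensorProduct.map_comp, LinearMap.comp_id]
    have h1 := hδ ⁅U, V⁆ p q
    rw [cocycle] at h1
    set_option synthInstance.maxHeartbeats 1000000 in
    simp only [LinearMap.add_apply, map_sub, map_add, k1, k2, hδ] at h1
    linarith [h1]
  -- pairing of a bracket with an `a`-term
  have hlie : ∀ (q p : Module.Dual ℝ g) (V Z : g),
      q ⁅a p V, Z⁆ = - br p (q ∘ₗ (LieAlgebra.ad ℝ g Z : g →ₗ[ℝ] g)) V := by
    intro q p V Z
    have h := ha p V (q ∘ₗ (LieAlgebra.ad ℝ g Z : g →ₗ[ℝ] g))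
    simp only [LinearMap.comp_apply, LieAlgebra.ad_apply] at h
    rw [← lie_skew, map_neg, h]
  rintro ⟨X, α⟩ ⟨Y, β⟩ ⟨Z, γ⟩
  simp only [hDbr]
  rw [Prod.ext_iff]
  simp only [Prod.fst_add, Prod.snd_add, Prod.fst_zero, Prod.snd_zero]
  constructor
  · rw [← Module.forall_dual_apply_eq_zero_iff ℝ]
    intro ξ
    have hlj : ξ ⁅X, ⁅Y, Z⁆⁆ + ξ ⁅Y, ⁅Z, X⁆⁆ + ξ ⁅Z, ⁅X, Y⁆⁆ = 0 := by
      rw [← map_add, ← map_add, lie_jacobi, map_zero]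
    have f1 : ξ ⁅⁅X, Y⁆, Z⁆ = ξ ⁅X, ⁅Y, Z⁆⁆ - ξ ⁅Y, ⁅X, Z⁆⁆ := by rw [lie_lie, map_sub]
    have f2 : ξ ⁅⁅Y, Z⁆, X⁆ = ξ ⁅Y, ⁅Z, X⁆⁆ - ξ ⁅Z, ⁅Y, X⁆⁆ := by rw [lie_lie, map_sub]
    have f3 : ξ ⁅⁅Z, X⁆, Y⁆ = ξ ⁅Z, ⁅X, Y⁆⁆ - ξ ⁅X, ⁅Z, Y⁆⁆ := by rw [lie_lie, map_sub]
    have g1 : ξ ⁅X, ⁅Z, Y⁆⁆ = - ξ ⁅X, ⁅Y, Z⁆⁆ := by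
      rw [(lie_skew (x := Z) (y := Y)).symm, lie_neg, map_neg]
    have g2 : ξ ⁅Y, ⁅X, Z⁆⁆ = - ξ ⁅Y, ⁅Z, X⁆⁆ := by
      rw [(lie_skew (x := X) (y := Z)).symm, lie_neg, map_neg]
    have g3 : ξ ⁅Z, ⁅Y, X⁆⁆ = - ξ ⁅Z, ⁅X, Y⁆⁆ := by
      rw [(lie_skew (x := Y) (y := X)).symm, lie_neg, map_neg]
    simp only [add_lie, sub_lie, map_add, map_sub, LinearMap.add_apply,
      LinearMap.sub_apply, ha, hlie, hstar]
    linarith [hlj, f1, f2, f3, g1, g2, g3,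
      hjac β γ ξ X, hjac γ α ξ Y, hjac α β ξ Z,
      hskew2 ξ β γ X, hskew2 ξ γ α Y, hskew2 ξ α β Z,
      hskew β (br γ ξ) X, hskew α (br γ ξ) Y,
      hskew γ (br α ξ) Y, hskew β (br α ξ) Z,
      hskew α (br β ξ) Z, hskew γ (br β ξ) X]
  · ext W
    have e1 : α ⁅⁅Y, Z⁆, W⁆ = α ⁅Y, ⁅Z, W⁆⁆ - α ⁅Z, ⁅Y, W⁆⁆ := by
      rw [lie_lie, map_sub]
    have e2 : β ⁅⁅Z, X⁆, W⁆ = β ⁅Z, ⁅X, W⁆⁆ - β ⁅X, ⁅Z, W⁆⁆ := by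
      rw [lie_lie, map_sub]
    have e3 : γ ⁅⁅X, Y⁆, W⁆ = γ ⁅X, ⁅Y, W⁆⁆ - γ ⁅Y, ⁅X, W⁆⁆ := by
      rw [lie_lie, map_sub]
    simp only [LinearMap.add_apply, LinearMap.sub_apply, LinearMap.comp_apply,
      LieAlgebra.ad_apply, LinearMap.zero_apply, add_lie, sub_lie, map_add, map_sub,
      ha, hlie, hstar]
    linarith [e1, e2, e3, hjac α β γ W,
      hskew γ (α ∘ₗ (LieAlgebra.ad ℝ g Y : g →ₗ[ℝ] g)) W,
      hskew α (β ∘ₗ (LieAlgebra.ad ℝ g Z : g →ₗ[ℝ] g)) W,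
      hskew β (γ ∘ₗ (LieAlgebra.ad ℝ g X : g →ₗ[ℝ] g)) W,
      hskew β (α ∘ₗ (LieAlgebra.ad ℝ g W : g →ₗ[ℝ] g)) Z,
      hskew γ (β ∘ₗ (LieAlgebra.ad ℝ g W : g →ₗ[ℝ] g)) X,
      hskew α (γ ∘ₗ (LieAlgebra.ad ℝ g W : g →ₗ[ℝ] g)) Y]
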